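/- Let (C₁, A₁) and (C₂, A₂) be two quantum linear systems (A_i ∈ ℂ^{2n_i×2n_i}, C_i ∈ ℂ^{2m×2n_i}) satisfying the physical realizability conditions A_i + A_i♭ + C_i♭ C_i = 0, with all eigenvalues of each A_i having strictly negative real part, and each pair controllable in the sense that every left-eigenvector v of A_i satisfies v C_i♭ ≠ 0. Then the series-product system with A = [[A₁, 0], [-C₂♭ C₁, A₂]] and C = [C₁ C₂] is controllable: every left-eigenvector (y₁, y₂) of A satisfies y₁ C₁♭ + y₂ C₂♭ ≠ 0. -/

import Mathlib

/-!
Suppose `y = (y₁, y₂)` is a left eigenvector of the cascade, with eigenvalue `λ`, and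
`y₁ C₁♭ + y₂ C₂♭ = 0`. Block triangularity makes `λ` an eigenvalue of `A₁` or of `A₂`, so
`Re λ < 0`. Substituting the coupling relation into the first block row and using physical
realizability `A₁ + C₁♭ C₁ = -A₁♭` gives `y₁ A₁♭ = -λ y₁`. Since `A₁♭ = J A₁ᴴ J` has the
conjugate spectrum of `A₁`, a nonzero `y₁` would force `Re λ > 0`; hence `y₁ = 0`, and then
`y₂` is a left eigenvector of `A₂` with `y₂ C₂♭ = 0`, contradicting controllability of `(C₂, A₂)`.
-/

noncomputable section
open Matrix

def Jmat (k : ℕ) : Matrix (Fin k ⊕ Fin k) (Fin k ⊕ Fin k) ℂ :=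
  Matrix.fromBlocks 1 0 0 (-1)

/-- Symplectic adjoint of a `2m × 2n` coupling matrix. -/
def cflat (m k : ℕ) (C : Matrix (Fin m ⊕ Fin m) (Fin k ⊕ Fin k) ℂ) :
    Matrix (Fin k ⊕ Fin k) (Fin m ⊕ Fin m) ℂ :=
  Jmat k * Cᴴ * Jmat m

theorem spectrum_star {R A : Type*} [CommSemiring R] [StarRing R] [Ring A] [StarRing A]
    [Algebra R A] [StarModule R A] (a : A) : spectrum R (star a) = star (spectrum R a) := by
  ext r
  simp only [Set.mem_star, spectrum.mem_iff, ← isUnit_star (a := algebraMap R A (star r) - a),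
    star_sub, ← algebraMap_star_comm, star_star]

namespace Matrix

variable {K n : Type*} [Field K] [Fintype n] [DecidableEq n]

theorem mem_spectrum_iff_exists_vecMul_eq_smul {M : Matrix n n K} {l : K} :
    l ∈ spectrum K M ↔ ∃ v ≠ 0, v ᵥ* M = l • v := by
  rw [spectrum.mem_iff, isUnit_iff_isUnit_det, isUnit_iff_ne_zero, not_not,
    ← exists_vecMul_eq_zero_iff, Algebra.algebraMap_eq_smul_one]
  simp only [vecMul_sub, vecMul_smul, vecMul_one, sub_eq_zero, eq_comm]

end Matrix

theorem Jmat_mul_self (k : ℕ) : Jmat k * Jmat k = 1 := by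
  simp [Jmat, fromBlocks_multiply, ← fromBlocks_one]

theorem spectrum_Jmat_mul_mul_Jmat (k : ℕ) (M : Matrix (Fin k ⊕ Fin k) (Fin k ⊕ Fin k) ℂ) :
    spectrum ℂ (Jmat k * M * Jmat k) = spectrum ℂ M :=
  spectrum.units_conjugate (u := ⟨Jmat k, Jmat k, Jmat_mul_self k, Jmat_mul_self k⟩)

theorem spectrum_Jmat_mul_conjTranspose_mul_Jmat (k : ℕ)
    (M : Matrix (Fin k ⊕ Fin k) (Fin k ⊕ Fin k) ℂ) :
    spectrum ℂ (Jmat k * Mᴴ * Jmat k) = star (spectrum ℂ M) := by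
  rw [spectrum_Jmat_mul_mul_Jmat, ← star_eq_conjTranspose, spectrum_star]

theorem re_pos_of_vecMul_add_cflat_mul_eq_smul {m k : ℕ}
    {A : Matrix (Fin k ⊕ Fin k) (Fin k ⊕ Fin k) ℂ} {C : Matrix (Fin m ⊕ Fin m) (Fin k ⊕ Fin k) ℂ}
    (hPR : A + Jmat k * Aᴴ * Jmat k + cflat m k C * C = 0)
    (hHur : ∀ μ ∈ spectrum ℂ A, μ.re < 0) {v : Fin k ⊕ Fin k → ℂ} {l : ℂ} (hv : v ≠ 0)
    (h : v ᵥ* (A + cflat m k C * C) = l • v) : 0 < l.re := by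
  have hflat : A + cflat m k C * C = -(Jmat k * Aᴴ * Jmat k) := by
    rw [eq_neg_iff_add_eq_zero, ← hPR]; abel
  have heig : v ᵥ* (Jmat k * Aᴴ * Jmat k) = (-l) • v := by
    rw [← neg_neg (Jmat k * Aᴴ * Jmat k), ← hflat, vecMul_neg, h, neg_smul]
  have hmem : -l ∈ spectrum ℂ (Jmat k * Aᴴ * Jmat k) :=
    mem_spectrum_iff_exists_vecMul_eq_smul.mpr ⟨v, hv, heig⟩
  rw [spectrum_Jmat_mul_conjTranspose_mul_Jmat, Set.mem_star] at hmem
  simpa using hHur _ hmem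

theorem stmt7_general (n₁ n₂ m : ℕ)
    (A₁ : Matrix (Fin n₁ ⊕ Fin n₁) (Fin n₁ ⊕ Fin n₁) ℂ)
    (C₁ : Matrix (Fin m ⊕ Fin m) (Fin n₁ ⊕ Fin n₁) ℂ)
    (A₂ : Matrix (Fin n₂ ⊕ Fin n₂) (Fin n₂ ⊕ Fin n₂) ℂ)
    (C₂ : Matrix (Fin m ⊕ Fin m) (Fin n₂ ⊕ Fin n₂) ℂ)
    (hPR₁ : A₁ + Jmat n₁ * A₁ᴴ * Jmat n₁ + cflat m n₁ C₁ * C₁ = 0)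
    (hHur₁ : ∀ μ ∈ spectrum ℂ A₁, μ.re < 0)
    (hHur₂ : ∀ μ ∈ spectrum ℂ A₂, μ.re < 0)
    (hctrl₂ : ∀ (v : Fin n₂ ⊕ Fin n₂ → ℂ) (l : ℂ), v ≠ 0 →
      Matrix.vecMul v A₂ = l • v → Matrix.vecMul v (cflat m n₂ C₂) ≠ 0) :
    ∀ (y : (Fin n₁ ⊕ Fin n₁) ⊕ (Fin n₂ ⊕ Fin n₂) → ℂ) (l : ℂ), y ≠ 0 →
      Matrix.vecMul y (Matrix.fromBlocks A₁ 0 (-(cflat m n₂ C₂ * C₁)) A₂) = l • y →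
      Matrix.vecMul (fun i => y (Sum.inl i)) (cflat m n₁ C₁)
        + Matrix.vecMul (fun i => y (Sum.inr i)) (cflat m n₂ C₂) ≠ 0 := by
  intro y l hy hy_eig hcoupling
  set y₁ : Fin n₁ ⊕ Fin n₁ → ℂ := fun i => y (Sum.inl i)
  set y₂ : Fin n₂ ⊕ Fin n₂ → ℂ := fun i => y (Sum.inr i)
  rw [vecMul_fromBlocks, vecMul_zero, zero_add] at hy_eig
  have h₁ : y₁ ᵥ* A₁ + y₂ ᵥ* -(cflat m n₂ C₂ * C₁) = l • y₁ :=
    funext fun i => congrFun hy_eig (Sum.inl i)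
  have h₂ : y₂ ᵥ* A₂ = l • y₂ := funext fun i => congrFun hy_eig (Sum.inr i)
  have hy : y₁ ≠ 0 ∨ y₂ ≠ 0 := by
    contrapose! hy
    ext (i | i)
    exacts [congrFun hy.1 i, congrFun hy.2 i]
  have hre : l.re < 0 := by
    by_cases hy₂ : y₂ = 0
    · have hA₁ : y₁ ᵥ* A₁ = l • y₁ := by simpa [hy₂] using h₁
      exact hHur₁ l (mem_spectrum_iff_exists_vecMul_eq_smul.mpr
        ⟨y₁, hy.resolve_right (not_not.mpr hy₂), hA₁⟩)
    · exact hHur₂ l (mem_spectrum_iff_exists_vecMul_eq_smul.mpr ⟨y₂, hy₂, h₂⟩)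
  have hy₁ : y₁ = 0 := by
    by_contra hy₁
    refine (re_pos_of_vecMul_add_cflat_mul_eq_smul hPR₁ hHur₁ hy₁ ?_).not_gt hre
    rw [vecMul_add, ← vecMul_vecMul, ← h₁, eq_neg_of_add_eq_zero_left hcoupling, vecMul_neg,
      ← vecMul_vecMul, neg_vecMul]
  exact hctrl₂ y₂ l (hy.resolve_left (not_not.mpr hy₁)) h₂ (by simpa [hy₁] using hcoupling)

theorem stmt7 (n₁ n₂ m : ℕ)
    (A₁ : Matrix (Fin n₁ ⊕ Fin n₁) (Fin n₁ ⊕ Fin n₁) ℂ)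
    (C₁ : Matrix (Fin m ⊕ Fin m) (Fin n₁ ⊕ Fin n₁) ℂ)
    (A₂ : Matrix (Fin n₂ ⊕ Fin n₂) (Fin n₂ ⊕ Fin n₂) ℂ)
    (C₂ : Matrix (Fin m ⊕ Fin m) (Fin n₂ ⊕ Fin n₂) ℂ)
    (hPR₁ : A₁ + Jmat n₁ * A₁ᴴ * Jmat n₁ + cflat m n₁ C₁ * C₁ = 0)
    (hPR₂ : A₂ + Jmat n₂ * A₂ᴴ * Jmat n₂ + cflat m n₂ C₂ * C₂ = 0)
    (hHur₁ : ∀ μ ∈ spectrum ℂ A₁, μ.re < 0)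
    (hHur₂ : ∀ μ ∈ spectrum ℂ A₂, μ.re < 0)
    (hctrl₁ : ∀ (v : Fin n₁ ⊕ Fin n₁ → ℂ) (l : ℂ), v ≠ 0 →
      Matrix.vecMul v A₁ = l • v → Matrix.vecMul v (cflat m n₁ C₁) ≠ 0)
    (hctrl₂ : ∀ (v : Fin n₂ ⊕ Fin n₂ → ℂ) (l : ℂ), v ≠ 0 →
      Matrix.vecMul v A₂ = l • v → Matrix.vecMul v (cflat m n₂ C₂) ≠ 0) :
    ∀ (y : (Fin n₁ ⊕ Fin n₁) ⊕ (Fin n₂ ⊕ Fin n₂) → ℂ) (l : ℂ), y ≠ 0 →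
      Matrix.vecMul y (Matrix.fromBlocks A₁ 0 (-(cflat m n₂ C₂ * C₁)) A₂) = l • y →
      Matrix.vecMul (fun i => y (Sum.inl i)) (cflat m n₁ C₁)
        + Matrix.vecMul (fun i => y (Sum.inr i)) (cflat m n₂ C₂) ≠ 0 :=
  stmt7_general n₁ n₂ m A₁ C₁ A₂ C₂ hPR₁ hHur₁ hHur₂ hctrl₂
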